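/- Let M be a finite set of mutant IDs, D ⊆ M the set of IDs of the mutant variants at a location, and suppose the original variant (enabled for M \ D) is among the filtered variants V, whose mutant variants have ID set D' ⊆ D. Then for every I ⊆ M, the set of mutants of I represented by V, namely {i ∈ I : i ∈ D' or i ∈ M \ D}, equals I \ (D \ D'). This is the correctness of the negative (ID-removal) branch of the constant-time implementation of filter_mutants. -/

import Mathlib

theorem stmt4_general {ID : Type} [DecidableEq ID] (M D D' : Finset ID) (I : Finset ID) (hI : I ⊆ M) :
    I.filter (fun i => i ∈ D' ∨ i ∈ M \ D) = I \ (D \ D') := by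
  ext i
  have hiM : i ∈ I → i ∈ M := @hI i
  simp only [Finset.mem_filter, Finset.mem_sdiff]
  tauto

/-- Correctness of the negative (ID-removal) branch of the constant-time
implementation of `filter_mutants`: with mutant-variant IDs `D ⊆ M`, filtered
mutant-variant IDs `D' ⊆ D`, and the original variant (enabled for `M \ D`)
included in the filtered variant set, for every `I ⊆ M` the set of mutants of `I`
represented by the filtered variants, `{i ∈ I : i ∈ D' ∨ i ∈ M \ D}`, equals
`I \ (D \ D')`. -/
theorem stmt4 {ID : Type} [DecidableEq ID] (M D D' : Finset ID) (hD : D ⊆ M)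
    (hD' : D' ⊆ D) (I : Finset ID) (hI : I ⊆ M) :
    I.filter (fun i => i ∈ D' ∨ i ∈ M \ D) = I \ (D \ D') :=
  stmt4_general M D D' I hI
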